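/- arXiv:0903.2192 — 5 statements merged into one kernel-verified Lean document; each statement's English description precedes it below -/
import Mathlib

section
/- The function U(x,t) = ln(((x+t)³ − 3(x+t)² − 6t)/((x+t)³ + 3(x+t)² − 6t)) − t/2 satisfies the dispersive water wave equation U_tt + 2U_t U_xx + 4U_x U_xt + 6U_x² U_xx − U_xxxx = 0 at all points where neither of the two cubic arguments vanishes. -/
/-- Partial derivative with respect to the first (space) variable. -/
noncomputable def pdx (U : ℝ → ℝ → ℝ) (x t : ℝ) : ℝ := deriv (fun y => U y t) x

/-- Partial derivative with respect to the second (time) variable. -/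
noncomputable def pdt (U : ℝ → ℝ → ℝ) (x t : ℝ) : ℝ := deriv (fun s => U x s) t

/-- The dispersive water wave equation
`U_tt + 2 U_t U_xx + 4 U_x U_xt + 6 U_x² U_xx - U_xxxx = 0` at the point `(x,t)`. -/
def DWWEq (U : ℝ → ℝ → ℝ) (x t : ℝ) : Prop :=
  pdt (pdt U) x t + 2 * pdt U x t * pdx (pdx U) x t
    + 4 * pdx U x t * pdt (pdx U) x t
    + 6 * (pdx U x t) ^ 2 * pdx (pdx U) x t
    - pdx (pdx (pdx (pdx U))) x t = 0

/-- The modified Boussinesq equation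
`(1/3) U_tt - 2 U_t U_xx - 6 U_x² U_xx + U_xxxx = 0` at the point `(x,t)`. -/
def MBQEq (U : ℝ → ℝ → ℝ) (x t : ℝ) : Prop :=
  (1 / 3) * pdt (pdt U) x t - 2 * pdt U x t * pdx (pdx U) x t
    - 6 * (pdx U x t) ^ 2 * pdx (pdx U) x t
    + pdx (pdx (pdx (pdx U))) x t = 0

open Real Filter Topology

/-! With `P_c = (x+t)³ + c(x+t)² - 6t`, the solution is `log P₋₃ - log P₃ - t/2` wherever
both cubics are nonzero (`Real.log` is `log |·|`, so their signs do not matter). Since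
`∂ₜ P_c = ∂ₓ P_c - 6`, all second partials of `P_c` coincide and `∂ₓ³ P_c = 6`; hence every
partial of `log P_c` entering the equation is a polynomial in `∂ₓP_c / P_c`, `∂ₓ²P_c / P_c` and
`1 / P_c`. Substituting them and clearing the denominators leaves a polynomial identity in
`x + t` and `t`. -/

section PartialDerivatives

variable {U F : ℝ → ℝ → ℝ} {s : Set (ℝ × ℝ)} {x t a : ℝ}

lemma pdx_eq_of_hasDerivAt_of_eqOn (hs : IsOpen s) (hxt : (x, t) ∈ s)
    (hUF : ∀ y τ, (y, τ) ∈ s → U y τ = F y τ)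
    (hF : HasDerivAt (F · t) a x) : pdx U x t = a := by
  have hUF' : (U · t) =ᶠ[𝓝 x] (F · t) :=
    ((Continuous.prodMk_left t).continuousAt.eventually_mem (hs.mem_nhds hxt)).mono
      fun y hy => hUF y t hy
  exact (hF.congr_of_eventuallyEq hUF').deriv

lemma pdt_eq_of_hasDerivAt_of_eqOn (hs : IsOpen s) (hxt : (x, t) ∈ s)
    (hUF : ∀ y τ, (y, τ) ∈ s → U y τ = F y τ)
    (hF : HasDerivAt (F x ·) a t) : pdt U x t = a := by
  have hUF' : (U x ·) =ᶠ[𝓝 t] (F x ·) :=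
    ((Continuous.prodMk_right x).continuousAt.eventually_mem (hs.mem_nhds hxt)).mono
      fun τ hτ => hUF x τ hτ
  exact (hF.congr_of_eventuallyEq hUF').deriv

end PartialDerivatives

lemma HasDerivAt.div_ratio {f g : ℝ → ℝ} {f' g' x : ℝ} (hg : HasDerivAt g g' x)
    (hf : HasDerivAt f f' x) (hx : f x ≠ 0) :
    HasDerivAt (fun y => g y / f y) (g' / f x - g x / f x * (f' / f x)) x :=
  (hg.div hf hx).congr_deriv (by field_simp)

namespace DWWLogSolution

noncomputable section

def poly (c s : ℝ) : ℝ := s ^ 3 + c * s ^ 2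

def poly' (c s : ℝ) : ℝ := 3 * s ^ 2 + 2 * c * s

def poly'' (c s : ℝ) : ℝ := 6 * s + 2 * c

lemma hasDerivAt_poly (c s : ℝ) : HasDerivAt (poly c) (poly' c s) s :=
  ((hasDerivAt_pow 3 s).add ((hasDerivAt_pow 2 s).const_mul c)).congr_deriv
    (by simp only [poly']; push_cast; ring)

lemma hasDerivAt_poly' (c s : ℝ) : HasDerivAt (poly' c) (poly'' c s) s :=
  (((hasDerivAt_pow 2 s).const_mul 3).add ((hasDerivAt_id s).const_mul (2 * c))).congr_deriv
    (by simp only [poly'']; push_cast; ring)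

lemma hasDerivAt_poly'' (c s : ℝ) : HasDerivAt (poly'' c) 6 s :=
  (((hasDerivAt_id s).const_mul 6).add_const (2 * c)).congr_deriv (mul_one 6)

def cubic (c x t : ℝ) : ℝ := poly c (x + t) - 6 * t

def ratio₁ (c x t : ℝ) : ℝ := poly' c (x + t) / cubic c x t

def ratio₂ (c x t : ℝ) : ℝ := poly'' c (x + t) / cubic c x t

def recip (c x t : ℝ) : ℝ := (cubic c x t)⁻¹

def logCubic (c x t : ℝ) : ℝ := log (cubic c x t)

def logCubicT (c x t : ℝ) : ℝ := ratio₁ c x t - 6 * recip c x t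

def logCubicXX (c x t : ℝ) : ℝ := ratio₂ c x t - ratio₁ c x t ^ 2

def logCubicXT (c x t : ℝ) : ℝ := ratio₂ c x t - ratio₁ c x t * logCubicT c x t

def logCubicTT (c x t : ℝ) : ℝ := ratio₂ c x t - logCubicT c x t ^ 2

def logCubicXXX (c x t : ℝ) : ℝ :=
  6 * recip c x t - 3 * ratio₁ c x t * ratio₂ c x t + 2 * ratio₁ c x t ^ 3

def logCubicXXXX (c x t : ℝ) : ℝ :=
  -24 * ratio₁ c x t * recip c x t - 3 * ratio₂ c x t ^ 2
    + 12 * ratio₁ c x t ^ 2 * ratio₂ c x t - 6 * ratio₁ c x t ^ 4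

section LogCubic

variable (c : ℝ) {x t : ℝ}

lemma continuous_cubic : Continuous fun p : ℝ × ℝ => cubic c p.1 p.2 := by
  unfold cubic poly; fun_prop

lemma hasDerivAt_cubic_x : HasDerivAt (cubic c · t) (poly' c (x + t)) x :=
  ((hasDerivAt_poly c (x + t)).comp_add_const x t).sub_const (6 * t)

lemma hasDerivAt_cubic_t : HasDerivAt (cubic c x ·) (poly' c (x + t) - 6) t :=
  (((hasDerivAt_poly c (x + t)).comp_const_add x t).sub
    ((hasDerivAt_id t).const_mul 6)).congr_deriv (by rw [mul_one])

variable {c} (hx : cubic c x t ≠ 0)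
include hx

lemma hasDerivAt_ratio₁_x : HasDerivAt (ratio₁ c · t) (logCubicXX c x t) x :=
  (((hasDerivAt_poly' c (x + t)).comp_add_const x t).div_ratio
    (hasDerivAt_cubic_x c) hx).congr_deriv (by simp only [logCubicXX, ratio₁, ratio₂]; ring)

lemma hasDerivAt_ratio₂_x :
    HasDerivAt (ratio₂ c · t) (6 * recip c x t - ratio₁ c x t * ratio₂ c x t) x :=
  (((hasDerivAt_poly'' c (x + t)).comp_add_const x t).div_ratio
    (hasDerivAt_cubic_x c) hx).congr_deriv (by simp only [recip, ratio₁, ratio₂]; ring)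

lemma hasDerivAt_recip_x : HasDerivAt (recip c · t) (-(ratio₁ c x t * recip c x t)) x :=
  ((hasDerivAt_cubic_x c).inv hx).congr_deriv (by simp only [recip, ratio₁]; ring)

lemma hasDerivAt_ratio₁_t : HasDerivAt (ratio₁ c x ·) (logCubicXT c x t) t :=
  (((hasDerivAt_poly' c (x + t)).comp_const_add x t).div_ratio
    (hasDerivAt_cubic_t c) hx).congr_deriv
    (by simp only [logCubicXT, logCubicT, recip, ratio₁, ratio₂]; ring)

lemma hasDerivAt_recip_t : HasDerivAt (recip c x ·) (-(logCubicT c x t * recip c x t)) t :=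
  ((hasDerivAt_cubic_t c).inv hx).congr_deriv
    (by simp only [logCubicT, recip, ratio₁]; field_simp)

lemma hasDerivAt_logCubic_x : HasDerivAt (logCubic c · t) (ratio₁ c x t) x :=
  (hasDerivAt_cubic_x c).log hx

lemma hasDerivAt_logCubic_t : HasDerivAt (logCubic c x ·) (logCubicT c x t) t :=
  ((hasDerivAt_cubic_t c).log hx).congr_deriv
    (by simp only [logCubicT, recip, ratio₁]; ring)

lemma hasDerivAt_logCubicXX_x : HasDerivAt (logCubicXX c · t) (logCubicXXX c x t) x :=
  ((hasDerivAt_ratio₂_x hx).sub ((hasDerivAt_ratio₁_x hx).pow 2)).congr_deriv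
    (by simp only [logCubicXX, logCubicXXX]; push_cast; ring)

lemma hasDerivAt_logCubicXXX_x : HasDerivAt (logCubicXXX c · t) (logCubicXXXX c x t) x :=
  ((((hasDerivAt_recip_x hx).const_mul 6).sub
      (((hasDerivAt_ratio₁_x hx).const_mul 3).mul (hasDerivAt_ratio₂_x hx))).add
    (((hasDerivAt_ratio₁_x hx).pow 3).const_mul 2)).congr_deriv
    (by simp only [logCubicXX, logCubicXXXX]; push_cast; ring)

lemma hasDerivAt_logCubicT_t : HasDerivAt (logCubicT c x ·) (logCubicTT c x t) t :=
  ((hasDerivAt_ratio₁_t hx).sub ((hasDerivAt_recip_t hx).const_mul 6)).congr_deriv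
    (by simp only [logCubicXT, logCubicTT, logCubicT]; ring)

end LogCubic

def dwwSol (x t : ℝ) : ℝ := log (cubic (-3) x t / cubic 3 x t) - t / 2

def regularSet : Set (ℝ × ℝ) := {p | cubic (-3) p.1 p.2 ≠ 0 ∧ cubic 3 p.1 p.2 ≠ 0}

lemma isOpen_regularSet : IsOpen regularSet :=
  (isOpen_ne_fun (continuous_cubic _) continuous_const).inter
    (isOpen_ne_fun (continuous_cubic _) continuous_const)

section DWWSol

variable {x t : ℝ} (hxt : (x, t) ∈ regularSet)
include hxt

lemma dwwSol_eq : dwwSol x t = logCubic (-3) x t - logCubic 3 x t - t / 2 := by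
  rw [dwwSol, log_div hxt.1 hxt.2, logCubic, logCubic]

lemma pdx_dwwSol : pdx dwwSol x t = ratio₁ (-3) x t - ratio₁ 3 x t :=
  pdx_eq_of_hasDerivAt_of_eqOn isOpen_regularSet hxt (fun _ _ hp => dwwSol_eq hp)
    (((hasDerivAt_logCubic_x hxt.1).sub (hasDerivAt_logCubic_x hxt.2)).sub_const _)

lemma pdt_dwwSol : pdt dwwSol x t = logCubicT (-3) x t - logCubicT 3 x t - 1 / 2 :=
  pdt_eq_of_hasDerivAt_of_eqOn isOpen_regularSet hxt (fun _ _ hp => dwwSol_eq hp)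
    (((hasDerivAt_logCubic_t hxt.1).sub (hasDerivAt_logCubic_t hxt.2)).sub
      ((hasDerivAt_id t).div_const 2))

lemma pdx_pdx_dwwSol : pdx (pdx dwwSol) x t = logCubicXX (-3) x t - logCubicXX 3 x t :=
  pdx_eq_of_hasDerivAt_of_eqOn isOpen_regularSet hxt (fun _ _ hp => pdx_dwwSol hp)
    ((hasDerivAt_ratio₁_x hxt.1).sub (hasDerivAt_ratio₁_x hxt.2))

lemma pdt_pdx_dwwSol : pdt (pdx dwwSol) x t = logCubicXT (-3) x t - logCubicXT 3 x t :=
  pdt_eq_of_hasDerivAt_of_eqOn isOpen_regularSet hxt (fun _ _ hp => pdx_dwwSol hp)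
    ((hasDerivAt_ratio₁_t hxt.1).sub (hasDerivAt_ratio₁_t hxt.2))

lemma pdt_pdt_dwwSol : pdt (pdt dwwSol) x t = logCubicTT (-3) x t - logCubicTT 3 x t :=
  pdt_eq_of_hasDerivAt_of_eqOn isOpen_regularSet hxt (fun _ _ hp => pdt_dwwSol hp)
    (((hasDerivAt_logCubicT_t hxt.1).sub (hasDerivAt_logCubicT_t hxt.2)).sub_const _)

lemma pdx_pdx_pdx_dwwSol :
    pdx (pdx (pdx dwwSol)) x t = logCubicXXX (-3) x t - logCubicXXX 3 x t :=
  pdx_eq_of_hasDerivAt_of_eqOn isOpen_regularSet hxt (fun _ _ hp => pdx_pdx_dwwSol hp)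
    ((hasDerivAt_logCubicXX_x hxt.1).sub (hasDerivAt_logCubicXX_x hxt.2))

lemma pdx_pdx_pdx_pdx_dwwSol :
    pdx (pdx (pdx (pdx dwwSol))) x t = logCubicXXXX (-3) x t - logCubicXXXX 3 x t :=
  pdx_eq_of_hasDerivAt_of_eqOn isOpen_regularSet hxt (fun _ _ hp => pdx_pdx_pdx_dwwSol hp)
    ((hasDerivAt_logCubicXXX_x hxt.1).sub (hasDerivAt_logCubicXXX_x hxt.2))

theorem dwwEq_dwwSol : DWWEq dwwSol x t := by
  rw [DWWEq, pdt_pdt_dwwSol hxt, pdt_dwwSol hxt, pdx_pdx_dwwSol hxt, pdx_dwwSol hxt,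
    pdt_pdx_dwwSol hxt, pdx_pdx_pdx_pdx_dwwSol hxt]
  obtain ⟨hP, hQ⟩ := hxt
  simp only [logCubicTT, logCubicT, logCubicXX, logCubicXT, logCubicXXXX, ratio₁, ratio₂, recip]
  field_simp
  simp only [cubic, poly, poly', poly'']
  ring

end DWWSol

end

end DWWLogSolution

/-- `U(x,t) = ln(((x+t)³-3(x+t)²-6t)/((x+t)³+3(x+t)²-6t)) - t/2` solves the DWW equation. -/
theorem dww_exact_sol_u2 :
    ∀ x t : ℝ, (x + t) ^ 3 - 3 * (x + t) ^ 2 - 6 * t ≠ 0 →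
      (x + t) ^ 3 + 3 * (x + t) ^ 2 - 6 * t ≠ 0 →
      DWWEq (fun x t =>
        Real.log (((x + t) ^ 3 - 3 * (x + t) ^ 2 - 6 * t) /
          ((x + t) ^ 3 + 3 * (x + t) ^ 2 - 6 * t)) - t / 2) x t := by
  intro x t hP hQ
  have hsol : (fun x t => log (((x + t) ^ 3 - 3 * (x + t) ^ 2 - 6 * t) /
      ((x + t) ^ 3 + 3 * (x + t) ^ 2 - 6 * t)) - t / 2) = DWWLogSolution.dwwSol := by
    funext x t
    simp only [DWWLogSolution.dwwSol, DWWLogSolution.cubic, DWWLogSolution.poly]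
    ring_nf
  rw [hsol]
  refine DWWLogSolution.dwwEq_dwwSol ⟨fun h => hP ?_, fun h => hQ ?_⟩ <;>
  · unfold DWWLogSolution.cubic DWWLogSolution.poly at h
    linear_combination h
end

section
/- Let κ, μ be constants and let V be a four-times differentiable function such that v = V' satisfies v''' = 6v²v' − 12z v v' + (4z² − 8μ)v' − 8v² + 12z v + 16μ. Then U(x,t) = V((x+2κt)/√(4t)) − κx − κ²t − μ ln t satisfies the dispersive water wave equation U_tt + 2U_t U_xx + 4U_x U_xt + 6U_x² U_xx − U_xxxx = 0 for all t > 0. -/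
/-!
Write `s = √(4t)` and `z = (x + 2κt)/s`. Since `∂ₓz = 1/s`, the `n`-th space derivative of `U`
is `V⁽ⁿ⁾(z)/sⁿ` for `n ≥ 2`, and the time derivatives follow from the chain rule through
`∂ₜz = 2κ/s - z/(2t)`. Substituting into the DWW equation and eliminating `t = s²/4`, its
left-hand side becomes `(F - v''')(z)/s⁴`, where `v = V'` and `F` is the right-hand side of the
reduced ODE; so it vanishes.
-/

open Real Topology

noncomputable def scalingVar (κ x t : ℝ) : ℝ := (x + 2 * κ * t) / √(4 * t)

noncomputable def scalingVarDt (κ x t : ℝ) : ℝ := 2 * κ / √(4 * t) - scalingVar κ x t / (2 * t)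

noncomputable def dwwScalingAnsatz (κ μ : ℝ) (V : ℝ → ℝ) (x t : ℝ) : ℝ :=
  V (scalingVar κ x t) - κ * x - κ ^ 2 * t - μ * log t

lemma pdx_sub_const (F : ℝ → ℝ → ℝ) (c : ℝ) : pdx (fun x t => F x t - c) = pdx F := by
  ext x t
  exact deriv_sub_const c

lemma hasDerivAt_sqrt_four_mul {t : ℝ} (ht : 0 < t) :
    HasDerivAt (fun t => √(4 * t)) (2 / √(4 * t)) t := by
  convert ((hasDerivAt_id t).const_mul 4).sqrt (by positivity) using 1
  simp only [id]
  field_simp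
  norm_num

section ScalingVariable

variable (κ : ℝ) {x t : ℝ}

lemma hasDerivAt_scalingVar_left : HasDerivAt (scalingVar κ · t) (1 / √(4 * t)) x :=
  ((hasDerivAt_id x).add_const (2 * κ * t)).div_const (√(4 * t))

lemma hasDerivAt_scalingVar_right (ht : 0 < t) :
    HasDerivAt (scalingVar κ x) (scalingVarDt κ x t) t := by
  have hs : 0 < √(4 * t) := sqrt_pos.mpr (by positivity)
  have hs2 : √(4 * t) ^ 2 = 4 * t := sq_sqrt (by positivity)
  have hnum : HasDerivAt (fun t => x + 2 * κ * t) (2 * κ) t := by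
    simpa using ((hasDerivAt_id t).const_mul (2 * κ)).const_add x
  refine (hnum.div (hasDerivAt_sqrt_four_mul ht) hs.ne').congr_deriv ?_
  simp only [scalingVarDt, scalingVar]
  field_simp
  linear_combination (2 * κ * t + x) * hs2

lemma hasDerivAt_scalingVarDt (ht : 0 < t) :
    HasDerivAt (scalingVarDt κ x)
      (-4 * κ / √(4 * t) ^ 3 - scalingVarDt κ x t / (2 * t) + scalingVar κ x t / (2 * t ^ 2))
      t := by
  have hs : 0 < √(4 * t) := sqrt_pos.mpr (by positivity)
  have h2t : HasDerivAt (fun t : ℝ => 2 * t) 2 t := by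
    simpa using (hasDerivAt_id t).const_mul (2 : ℝ)
  refine (((hasDerivAt_const t (2 * κ)).div (hasDerivAt_sqrt_four_mul ht) hs.ne').sub
    ((hasDerivAt_scalingVar_right κ ht).div h2t (by positivity))).congr_deriv ?_
  field_simp
  ring

end ScalingVariable

lemma pdx_comp_scalingVar_div_pow {f : ℝ → ℝ} (hf : Differentiable ℝ f) (κ : ℝ) (k : ℕ) :
    pdx (fun x t => f (scalingVar κ x t) / √(4 * t) ^ k)
      = fun x t => deriv f (scalingVar κ x t) / √(4 * t) ^ (k + 1) := by
  ext x t
  refine HasDerivAt.deriv ?_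
  refine (((hf _).hasDerivAt.comp x (hasDerivAt_scalingVar_left κ)).div_const _).congr_deriv ?_
  ring

lemma pdx_iterate_comp_scalingVar_div_pow (κ : ℝ) :
    ∀ (n k : ℕ) {f : ℝ → ℝ}, ContDiff ℝ n f →
      pdx^[n] (fun x t => f (scalingVar κ x t) / √(4 * t) ^ k)
        = fun x t => iteratedDeriv n f (scalingVar κ x t) / √(4 * t) ^ (k + n)
  | 0, _, _, _ => by simp
  | n + 1, k, f, hf => by
    rw [Function.iterate_succ_apply, pdx_comp_scalingVar_div_pow (hf.differentiable (by simp)),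
      pdx_iterate_comp_scalingVar_div_pow κ n (k + 1) hf.deriv', iteratedDeriv_succ', add_assoc,
      add_comm 1 n]

section Ansatz

variable {κ μ : ℝ} {V : ℝ → ℝ} {x t : ℝ}

lemma pdx_dwwScalingAnsatz (hV : Differentiable ℝ V) :
    pdx (dwwScalingAnsatz κ μ V) = fun x t => deriv V (scalingVar κ x t) / √(4 * t) ^ 1 - κ := by
  ext x t
  refine HasDerivAt.deriv ?_
  refine ((((hV _).hasDerivAt.comp x (hasDerivAt_scalingVar_left κ)).sub
    ((hasDerivAt_id x).const_mul κ)).sub_const (κ ^ 2 * t)).sub_const (μ * log t)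
    |>.congr_deriv ?_
  ring

lemma pdx_iterate_dwwScalingAnsatz {n : ℕ} (hn : 2 ≤ n) (hV : ContDiff ℝ n V) :
    pdx^[n] (dwwScalingAnsatz κ μ V)
      = fun x t => iteratedDeriv n V (scalingVar κ x t) / √(4 * t) ^ n := by
  obtain ⟨m, rfl⟩ := Nat.exists_eq_add_of_le' hn
  rw [Function.iterate_succ_apply, Function.iterate_succ_apply,
    pdx_dwwScalingAnsatz (hV.differentiable (by simp)), pdx_sub_const,
    ← Function.iterate_succ_apply, pdx_iterate_comp_scalingVar_div_pow κ (m + 1) 1 hV.deriv',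
    ← iteratedDeriv_succ', add_comm 1]

lemma pdt_dwwScalingAnsatz (hV : Differentiable ℝ V) (ht : 0 < t) :
    pdt (dwwScalingAnsatz κ μ V) x t
      = deriv V (scalingVar κ x t) * scalingVarDt κ x t - κ ^ 2 - μ / t := by
  refine HasDerivAt.deriv ?_
  refine (((hV _).hasDerivAt.comp t (hasDerivAt_scalingVar_right κ ht)).sub_const (κ * x)).sub
    ((hasDerivAt_id t).const_mul (κ ^ 2)) |>.sub ((hasDerivAt_log ht.ne').const_mul μ)
    |>.congr_deriv ?_
  simp [div_eq_mul_inv]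

lemma pdt_pdx_dwwScalingAnsatz (hV : ContDiff ℝ 2 V) (ht : 0 < t) :
    pdt (pdx (dwwScalingAnsatz κ μ V)) x t
      = deriv (deriv V) (scalingVar κ x t) * scalingVarDt κ x t / √(4 * t)
        - deriv V (scalingVar κ x t) * 2 / √(4 * t) ^ 3 := by
  have hs : 0 < √(4 * t) := sqrt_pos.mpr (by positivity)
  have hV' : Differentiable ℝ (deriv V) := hV.deriv'.differentiable one_ne_zero
  simp only [pdx_dwwScalingAnsatz (hV.differentiable two_ne_zero), pow_one]
  refine HasDerivAt.deriv ?_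
  refine (((hV' _).hasDerivAt.comp t (hasDerivAt_scalingVar_right κ ht)).div
    (hasDerivAt_sqrt_four_mul ht) hs.ne').sub_const κ |>.congr_deriv ?_
  simp only [Function.comp]
  field_simp

lemma pdt_pdt_dwwScalingAnsatz (hV : ContDiff ℝ 2 V) (ht : 0 < t) :
    pdt (pdt (dwwScalingAnsatz κ μ V)) x t
      = deriv (deriv V) (scalingVar κ x t) * scalingVarDt κ x t ^ 2
        + deriv V (scalingVar κ x t) * (-4 * κ / √(4 * t) ^ 3 - scalingVarDt κ x t / (2 * t)
          + scalingVar κ x t / (2 * t ^ 2)) + μ / t ^ 2 := by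
  have hV' : Differentiable ℝ (deriv V) := hV.deriv'.differentiable one_ne_zero
  have hUt : pdt (dwwScalingAnsatz κ μ V) x =ᶠ[𝓝 t]
      fun s => deriv V (scalingVar κ x s) * scalingVarDt κ x s - κ ^ 2 - μ / s := by
    filter_upwards [eventually_gt_nhds ht] with s hs
      using pdt_dwwScalingAnsatz (hV.differentiable two_ne_zero) hs
  rw [pdt, hUt.deriv_eq]
  refine HasDerivAt.deriv ?_
  refine ((((hV' _).hasDerivAt.comp t (hasDerivAt_scalingVar_right κ ht)).mul
    (hasDerivAt_scalingVarDt κ ht)).sub_const (κ ^ 2)).sub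
    ((hasDerivAt_const t μ).div (hasDerivAt_id t) ht.ne') |>.congr_deriv ?_
  simp only [Function.comp_apply, id]
  field_simp
  ring

end Ansatz

/-- Consistency of the generalized scaling reduction of the DWW equation: if `v = V'`
satisfies `v''' = 6v²v' - 12zvv' + (4z²-8μ)v' - 8v² + 12zv + 16μ`, then
`U(x,t) = V((x+2κt)/√(4t)) - κx - κ²t - μ ln t` solves the DWW equation for `t > 0`. -/
theorem dww_scaling_reduction_consistency (κ μ : ℝ) (V : ℝ → ℝ) (hV : ContDiff ℝ 4 V)
    (hode : ∀ z : ℝ, iteratedDeriv 3 (deriv V) z =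
      6 * (deriv V z) ^ 2 * deriv (deriv V) z
        - 12 * z * (deriv V z) * deriv (deriv V) z
        + (4 * z ^ 2 - 8 * μ) * deriv (deriv V) z
        - 8 * (deriv V z) ^ 2 + 12 * z * (deriv V z) + 16 * μ) :
    ∀ x t : ℝ, 0 < t →
      DWWEq (fun x t =>
        V ((x + 2 * κ * t) / Real.sqrt (4 * t)) - κ * x - κ ^ 2 * t - μ * Real.log t)
        x t := by
  intro x t ht
  have hV₂ : ContDiff ℝ 2 V := hV.of_le (by norm_num)
  change DWWEq (dwwScalingAnsatz κ μ V) x t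
  rw [DWWEq, pdt_pdt_dwwScalingAnsatz hV₂ ht, pdt_pdx_dwwScalingAnsatz hV₂ ht,
    pdt_dwwScalingAnsatz (hV₂.differentiable two_ne_zero) ht,
    show ∀ U, pdx (pdx (pdx (pdx U))) = pdx^[4] U from fun _ => rfl,
    show ∀ U, pdx (pdx U) = pdx^[2] U from fun _ => rfl,
    pdx_iterate_dwwScalingAnsatz le_rfl hV₂, pdx_iterate_dwwScalingAnsatz (by norm_num) hV,
    pdx_dwwScalingAnsatz (hV₂.differentiable two_ne_zero)]
  beta_reduce
  rw [iteratedDeriv_succ' (n := 3), hode, iteratedDeriv_succ' (n := 1), iteratedDeriv_one]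
  have hs : √(4 * t) ^ 2 = 4 * t := sq_sqrt (by positivity)
  have hs0 : √(4 * t) ≠ 0 := (sqrt_pos.mpr (by positivity)).ne'
  unfold scalingVarDt
  generalize scalingVar κ x t = z, √(4 * t) = s at *
  obtain rfl : t = s ^ 2 / 4 := by linarith
  field_simp
  ring
end

section
/- For the generalized Hermite polynomials H_{m,n} (Wronskians of consecutive Hermite polynomials), the rational function w(z) = d/dz ln(H_{2,1}(z)/H_{1,1}(z)) = H_2'(z)/H_2(z) − H_1'(z)/H_1(z) solves the fourth Painlevé equation with α = 2·1 + 1 + 1 = 4 and β = −2·1² = −2, at all z where H_1(z) ≠ 0 and H_2(z) ≠ 0 and w(z) ≠ 0. -/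
/-!
Near a point where `H₁ H₂ ≠ 0`, `w = H₂'/H₂ - H₁'/H₁` agrees with the polynomial quotient
`(H₂' H₁ - H₁' H₂) / (H₂ H₁) = (8z² + 4) / (8z³ - 4z)`. The quotient rule, applied twice, expresses
`w'` and `w''` through the same polynomials and their derivatives, and P_IV becomes an identity
of rational functions in `z`.
-/

/-- The physicists' Hermite polynomials, as real functions, via the recurrence
`H₀ = 1`, `H₁(x) = 2x`, `H_{n+2}(x) = 2x H_{n+1}(x) - 2(n+1) H_n(x)`. -/
noncomputable def hermiteH : ℕ → ℝ → ℝ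
  | 0, _ => 1
  | 1, x => 2 * x
  | (n + 2), x => 2 * x * hermiteH (n + 1) x - 2 * (n + 1) * hermiteH n x

open Polynomial Filter Topology

namespace Polynomial

variable (p q : ℝ[X]) {z : ℝ}

theorem hasDerivAt_eval_div_eval (hq : q.eval z ≠ 0) :
    HasDerivAt (fun y => p.eval y / q.eval y)
      ((derivative p * q - p * derivative q).eval z / (q ^ 2).eval z) z := by
  rw [eval_sub, eval_mul, eval_mul, eval_pow]
  exact (p.hasDerivAt z).div (q.hasDerivAt z) hq

theorem deriv_eval_div_eval_eventuallyEq (hq : q.eval z ≠ 0) :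
    deriv (fun y => p.eval y / q.eval y) =ᶠ[𝓝 z]
      fun y => (derivative p * q - p * derivative q).eval y / (q ^ 2).eval y := by
  filter_upwards [q.continuous.continuousAt.eventually_ne hq] with y hy
  exact (hasDerivAt_eval_div_eval p q hy).deriv

theorem deriv_deriv_eval_div_eval (hq : q.eval z ≠ 0) :
    deriv (deriv fun y => p.eval y / q.eval y) z =
      (derivative (derivative p)).eval z / q.eval z
        - 2 * (derivative p).eval z * (derivative q).eval z / q.eval z ^ 2
        - p.eval z * (derivative (derivative q)).eval z / q.eval z ^ 2
        + 2 * p.eval z * (derivative q).eval z ^ 2 / q.eval z ^ 3 := by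
  rw [(deriv_eval_div_eval_eventuallyEq p q hq).deriv_eq,
    (hasDerivAt_eval_div_eval _ (q ^ 2) (by simpa using hq)).deriv]
  simp only [derivative_mul, derivative_sub, derivative_pow, eval_add, eval_sub, eval_mul,
    eval_pow, eval_C]
  field_simp
  ring

theorem eval_div_sub_eval_div_eventuallyEq (p₁ q₁ p₂ q₂ : ℝ[X]) (h₁ : q₁.eval z ≠ 0)
    (h₂ : q₂.eval z ≠ 0) :
    (fun y => p₁.eval y / q₁.eval y - p₂.eval y / q₂.eval y) =ᶠ[𝓝 z]
      fun y => (p₁ * q₂ - p₂ * q₁).eval y / (q₁ * q₂).eval y := by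
  filter_upwards [q₁.continuous.continuousAt.eventually_ne h₁,
    q₂.continuous.continuousAt.eventually_ne h₂] with y hy₁ hy₂
  simp only [eval_sub, eval_mul]
  field_simp

end Polynomial

noncomputable def hermitePoly : ℕ → ℝ[X]
  | 0 => 1
  | 1 => 2 * X
  | (n + 2) => 2 * X * hermitePoly (n + 1) - 2 * ((n : ℝ[X]) + 1) * hermitePoly n

theorem hermiteH_eq_eval : ∀ n, hermiteH n = fun x => (hermitePoly n).eval x
  | 0 => by funext x; simp [hermiteH, hermitePoly]
  | 1 => by funext x; simp [hermiteH, hermitePoly]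
  | n + 2 => by
    funext x
    simp [hermiteH, hermitePoly, hermiteH_eq_eval n, hermiteH_eq_eval (n + 1)]

theorem hermitePoly_one : hermitePoly 1 = 2 * X := rfl

theorem hermitePoly_two : hermitePoly 2 = 4 * X ^ 2 - 2 := by
  simp only [hermitePoly]
  push_cast
  ring

theorem derivative_hermitePoly_one : derivative (hermitePoly 1) = 2 := by
  simp [hermitePoly_one]

theorem derivative_hermitePoly_two : derivative (hermitePoly 2) = 8 * X := by
  rw [hermitePoly_two, derivative_sub, derivative_mul, derivative_X_sq, derivative_ofNat,
    derivative_ofNat, C_ofNat]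
  ring

/-- The rational solution `w = H₂'/H₂ - H₁'/H₁ = d/dz ln(H_{2,1}/H_{1,1})` of the
fourth Painlevé equation with `α = 4`, `β = -2` (the case `m = n = 1` of the family
`w^{[1]}_{m,n} = d/dz ln(H_{m+1,n}/H_{m,n})`). -/
theorem piv_genHermite_sol_1 :
    ∀ z : ℝ, hermiteH 1 z ≠ 0 → hermiteH 2 z ≠ 0 →
      let w : ℝ → ℝ := fun y =>
        deriv (hermiteH 2) y / hermiteH 2 y - deriv (hermiteH 1) y / hermiteH 1 y
      w z ≠ 0 →
        deriv (deriv w) z =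
          (deriv w z) ^ 2 / (2 * w z) + (3 / 2) * (w z) ^ 3 + 4 * z * (w z) ^ 2
            + 2 * (z ^ 2 - 4) * w z + (-2) / (w z) := by
  intro z h₁ h₂ w _
  simp only [hermiteH_eq_eval] at h₁ h₂
  have hP : derivative (hermitePoly 2) * hermitePoly 1 - derivative (hermitePoly 1) * hermitePoly 2
      = 8 * X ^ 2 + 4 := by
    rw [derivative_hermitePoly_one, derivative_hermitePoly_two, hermitePoly_one, hermitePoly_two]
    ring
  have hQ : hermitePoly 2 * hermitePoly 1 = 8 * X ^ 3 - 4 * X := by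
    rw [hermitePoly_one, hermitePoly_two]
    ring
  have hw_eq :
      w =ᶠ[𝓝 z] fun y => (8 * X ^ 2 + 4 : ℝ[X]).eval y / (8 * X ^ 3 - 4 * X : ℝ[X]).eval y := by
    simp only [w, hermiteH_eq_eval, Polynomial.deriv, ← hP, ← hQ]
    exact eval_div_sub_eval_div_eventuallyEq _ _ _ _ h₂ h₁
  have hQz : (8 * X ^ 3 - 4 * X : ℝ[X]).eval z ≠ 0 := by
    rw [← hQ, eval_mul]
    exact mul_ne_zero h₂ h₁
  rw [hw_eq.deriv.deriv_eq, hw_eq.deriv.eq_of_nhds, hw_eq.eq_of_nhds,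
    deriv_deriv_eval_div_eval _ _ hQz, (hasDerivAt_eval_div_eval _ _ hQz).deriv]
  simp only [derivative_add, derivative_sub, derivative_mul, derivative_X_pow, derivative_X,
    derivative_ofNat, derivative_one, derivative_C, derivative_zero, eval_add, eval_sub, eval_mul,
    eval_pow, eval_X, eval_ofNat, eval_C, eval_one, eval_zero] at hQz ⊢
  field_simp
  ring
end

section
/- The function w(z) = d/dz ln(H_{1,1}(z)/H_{1,2}(z)), where H_{1,1}(z) = H_1(z) = 2z and H_{1,2}(z) = W(H_1, H_2)(z) = 8z² + 4, solves the fourth Painlevé equation with α = −(1+2+1) = −4 and β = −2, at all z where the relevant quantities are nonzero. -/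
open Real Filter Topology

/-! Away from `z = 0`, `w = (log H_{1,1})' - (log H_{1,2})' = 1/z - 16z/(8z² + 4)`
(`Real.log` is `log |·|`, so no sign condition is needed). Since `z ≠ 0` is an open
condition, `w'` and `w''` are the derivatives of this rational function, and `P_IV`
becomes a polynomial identity once the denominators `z`, `2z² + 1` and `1 - 2z²`
(the numerator of `w`) are cleared. -/

theorem hasDerivAt_log_div {p q : ℝ → ℝ} {p' q' y : ℝ} (hp : HasDerivAt p p' y)
    (hq : HasDerivAt q q' y) (hp0 : p y ≠ 0) (hq0 : q y ≠ 0) :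
    HasDerivAt (fun s => log (p s / q s)) (p' / p y - q' / q y) y := by
  refine ((hp.div hq hq0).log (div_ne_zero hp0 hq0)).congr_deriv ?_
  simp only [Pi.div_apply]
  field_simp

noncomputable def pivSol (z : ℝ) : ℝ := z⁻¹ - 16 * z / (8 * z ^ 2 + 4)

noncomputable def pivSolDeriv (z : ℝ) : ℝ :=
  -(z ^ 2)⁻¹ - (64 - 128 * z ^ 2) / (8 * z ^ 2 + 4) ^ 2

theorem hasDerivAt_eight_mul_sq_add_four (z : ℝ) :
    HasDerivAt (fun s : ℝ => 8 * s ^ 2 + 4) (16 * z) z :=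
  (((hasDerivAt_pow 2 z).const_mul 8).add_const 4).congr_deriv (by ring)

theorem hasDerivAt_log_genHermite_ratio {z : ℝ} (hz : z ≠ 0) :
    HasDerivAt (fun s : ℝ => log (2 * s / (8 * s ^ 2 + 4))) (pivSol z) z := by
  refine (hasDerivAt_log_div ((hasDerivAt_id' z).const_mul 2) (hasDerivAt_eight_mul_sq_add_four z)
    (by simpa using hz) (by positivity)).congr_deriv ?_
  rw [pivSol]
  field_simp

theorem hasDerivAt_pivSol {z : ℝ} (hz : z ≠ 0) : HasDerivAt pivSol (pivSolDeriv z) z := by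
  have hq : 8 * z ^ 2 + 4 ≠ 0 := by positivity
  refine ((hasDerivAt_inv hz).sub
    (((hasDerivAt_id' z).const_mul 16).div (hasDerivAt_eight_mul_sq_add_four z) hq)).congr_deriv ?_
  rw [pivSolDeriv]
  field_simp
  ring

theorem hasDerivAt_pivSolDeriv {z : ℝ} (hz : z ≠ 0) :
    HasDerivAt pivSolDeriv (2 / z ^ 3 - 1024 * z * (2 * z ^ 2 - 3) / (8 * z ^ 2 + 4) ^ 3) z := by
  have hq : 8 * z ^ 2 + 4 ≠ 0 := by positivity
  have hnum : HasDerivAt (fun s : ℝ => 64 - 128 * s ^ 2) (-(256 * z)) z :=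
    (((hasDerivAt_pow 2 z).const_mul 128).const_sub 64).congr_deriv (by ring)
  refine (((hasDerivAt_pow 2 z).fun_inv (pow_ne_zero 2 hz)).neg.sub
    (hnum.fun_div ((hasDerivAt_eight_mul_sq_add_four z).fun_pow 2) (pow_ne_zero 2 hq))).congr_deriv ?_
  field_simp
  ring

theorem pivSol_eq {z : ℝ} (hz : z ≠ 0) : pivSol z = (1 - 2 * z ^ 2) / (z * (2 * z ^ 2 + 1)) := by
  have : 2 * z ^ 2 + 1 ≠ 0 := by positivity
  rw [pivSol]
  field_simp
  ring

theorem pivSol_solves_piv {z : ℝ} (hz : z ≠ 0) (hw : pivSol z ≠ 0) :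
    2 / z ^ 3 - 1024 * z * (2 * z ^ 2 - 3) / (8 * z ^ 2 + 4) ^ 3 =
      pivSolDeriv z ^ 2 / (2 * pivSol z) + (3 / 2) * pivSol z ^ 3 + 4 * z * pivSol z ^ 2
        + 2 * (z ^ 2 - (-4)) * pivSol z + (-2) / pivSol z := by
  have h1 : 2 * z ^ 2 + 1 ≠ 0 := by positivity
  have h2 : 1 - 2 * z ^ 2 ≠ 0 := by
    rintro h
    exact hw (by rw [pivSol_eq hz, h, zero_div])
  rw [pivSol_eq hz, pivSolDeriv]
  field_simp
  ring

/-- The rational solution `w = d/dz ln(H_{1,1}/H_{1,2})`, with `H_{1,1}(z) = 2z` and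
`H_{1,2}(z) = 8z² + 4`, of the fourth Painlevé equation with `α = -4`, `β = -2`. -/
theorem piv_genHermite_sol_2 :
    ∀ z : ℝ, 2 * z ≠ 0 → 8 * z ^ 2 + 4 ≠ 0 →
      let w : ℝ → ℝ := fun y => deriv (fun s : ℝ => Real.log ((2 * s) / (8 * s ^ 2 + 4))) y
      w z ≠ 0 →
        deriv (deriv w) z =
          (deriv w z) ^ 2 / (2 * w z) + (3 / 2) * (w z) ^ 3 + 4 * z * (w z) ^ 2
            + 2 * (z ^ 2 - (-4)) * w z + (-2) / (w z) := by
  intro z h2z _ w hw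
  have hz : z ≠ 0 := right_ne_zero_of_mul h2z
  have hnear : ∀ᶠ y in 𝓝 z, y ≠ 0 := eventually_ne_nhds hz
  have hw_eq : w =ᶠ[𝓝 z] pivSol :=
    hnear.mono fun y hy => (hasDerivAt_log_genHermite_ratio hy).deriv
  have hw'_eq : deriv w =ᶠ[𝓝 z] pivSolDeriv :=
    hw_eq.deriv.trans (hnear.mono fun y hy => (hasDerivAt_pivSol hy).deriv)
  rw [hw_eq.eq_of_nhds] at hw ⊢
  rw [hw'_eq.deriv_eq, hw'_eq.eq_of_nhds, (hasDerivAt_pivSolDeriv hz).deriv]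
  exact pivSol_solves_piv hz hw
end

section
/- For t > 0, the function U(x,t) = ln(Φ_{2,1}(x,t)/Φ_{1,1}(x,t)) + x²/(4t) − (5/2)ln t, where Φ_{1,1}(x,t) = x and Φ_{2,1}(x,t) = x² − 2t (the cases φ_1 = x, φ_2 = x² − 2t of the polynomials generated by exp(xλ − tλ²)), satisfies the dispersive water wave equation U_tt + 2U_t U_xx + 4U_x U_xt + 6U_x² U_xx − U_xxxx = 0 wherever x ≠ 0 and x² ≠ 2t. -/
/-!
On the open set where `x`, `t` and `x² - 2t` are nonzero, the solution `U` is smooth and its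
partial derivatives are explicit rational functions. Partial derivatives only see a
neighbourhood of the point, so each iterated derivative is obtained by differentiating the
closed form of the previous one on that open set. Substituting the closed forms turns the
DWW equation into an identity between rational functions of `x` and `t`.
-/

open Filter Topology

section Locality

variable {Ω : Set (ℝ × ℝ)} {U V W : ℝ → ℝ → ℝ}

theorem pdx_eqOn_of_hasDerivAt (hΩ : IsOpen Ω) (hUV : ∀ x t, (x, t) ∈ Ω → U x t = V x t)
    (hV : ∀ x t, (x, t) ∈ Ω → HasDerivAt (fun y => V y t) (W x t) x) :
    ∀ x t, (x, t) ∈ Ω → pdx U x t = W x t := by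
  intro x t hxt
  have hslice : {y | (y, t) ∈ Ω} ∈ 𝓝 x := (hΩ.preimage (by fun_prop)).mem_nhds hxt
  have hloc : (fun y => U y t) =ᶠ[𝓝 x] fun y => V y t :=
    eventually_of_mem hslice fun y hy => hUV y t hy
  rw [pdx, hloc.deriv_eq]
  exact (hV x t hxt).deriv

theorem pdt_eqOn_of_hasDerivAt (hΩ : IsOpen Ω) (hUV : ∀ x t, (x, t) ∈ Ω → U x t = V x t)
    (hV : ∀ x t, (x, t) ∈ Ω → HasDerivAt (fun s => V x s) (W x t) t) :
    ∀ x t, (x, t) ∈ Ω → pdt U x t = W x t := by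
  intro x t hxt
  have hslice : {s | (x, s) ∈ Ω} ∈ 𝓝 t := (hΩ.preimage (by fun_prop)).mem_nhds hxt
  have hloc : (fun s => U x s) =ᶠ[𝓝 t] fun s => V x s :=
    eventually_of_mem hslice fun s hs => hUV x s hs
  rw [pdt, hloc.deriv_eq]
  exact (hV x t hxt).deriv

end Locality

namespace DWWRational

def domain : Set (ℝ × ℝ) := {p | p.1 ≠ 0 ∧ p.2 ≠ 0 ∧ p.1 ^ 2 - 2 * p.2 ≠ 0}

theorem mem_domain {x t : ℝ} : (x, t) ∈ domain ↔ x ≠ 0 ∧ t ≠ 0 ∧ x ^ 2 - 2 * t ≠ 0 := Iff.rfl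

theorem isOpen_domain : IsOpen domain :=
  (isOpen_ne_fun continuous_fst continuous_const).inter <|
    (isOpen_ne_fun continuous_snd continuous_const).inter <|
      isOpen_ne_fun (by fun_prop) continuous_const

noncomputable def sol (x t : ℝ) : ℝ :=
  Real.log ((x ^ 2 - 2 * t) / x) + x ^ 2 / (4 * t) - (5 / 2) * Real.log t

noncomputable def solX (x t : ℝ) : ℝ := 2 * x / (x ^ 2 - 2 * t) - 1 / x + x / (2 * t)

noncomputable def solXX (x t : ℝ) : ℝ :=
  2 / (x ^ 2 - 2 * t) - 4 * x ^ 2 / (x ^ 2 - 2 * t) ^ 2 + 1 / x ^ 2 + 1 / (2 * t)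

noncomputable def solXXX (x t : ℝ) : ℝ :=
  -(12 * x) / (x ^ 2 - 2 * t) ^ 2 + 16 * x ^ 3 / (x ^ 2 - 2 * t) ^ 3 - 2 / x ^ 3

noncomputable def solXXXX (x t : ℝ) : ℝ :=
  -12 / (x ^ 2 - 2 * t) ^ 2 + 96 * x ^ 2 / (x ^ 2 - 2 * t) ^ 3
    - 96 * x ^ 4 / (x ^ 2 - 2 * t) ^ 4 + 6 / x ^ 4

noncomputable def solT (x t : ℝ) : ℝ := -2 / (x ^ 2 - 2 * t) - x ^ 2 / (4 * t ^ 2) - 5 / 2 / t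

noncomputable def solTT (x t : ℝ) : ℝ :=
  -4 / (x ^ 2 - 2 * t) ^ 2 + x ^ 2 / (2 * t ^ 3) + 5 / 2 / t ^ 2

noncomputable def solXT (x t : ℝ) : ℝ := 4 * x / (x ^ 2 - 2 * t) ^ 2 - x / (2 * t ^ 2)

section Derivatives

variable {x t : ℝ}

theorem hasDerivAt_sq_sub_x : HasDerivAt (fun y : ℝ => y ^ 2 - 2 * t) (2 * x) x := by
  simpa using (hasDerivAt_pow 2 x).sub_const (2 * t)

theorem hasDerivAt_sq_sub_t : HasDerivAt (fun s : ℝ => x ^ 2 - 2 * s) (-2) t := by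
  simpa using ((hasDerivAt_id t).const_mul 2).const_sub (x ^ 2)

theorem hasDerivAt_sol_x (h : (x, t) ∈ domain) : HasDerivAt (fun y => sol y t) (solX x t) x := by
  obtain ⟨hx, ht, hq⟩ := mem_domain.1 h
  have hlog := (hasDerivAt_sq_sub_x.div (hasDerivAt_id x) hx).log (div_ne_zero hq hx)
  have hquad := (hasDerivAt_pow 2 x).div_const (4 * t)
  refine ((hlog.add hquad).sub_const _).congr_deriv ?_
  simp only [solX, id, Pi.div_apply]
  field_simp
  ring

theorem hasDerivAt_sol_t (h : (x, t) ∈ domain) : HasDerivAt (fun s => sol x s) (solT x t) t := by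
  obtain ⟨hx, ht, hq⟩ := mem_domain.1 h
  have hlog := (hasDerivAt_sq_sub_t.div_const x).log (div_ne_zero hq hx)
  have hquad := (hasDerivAt_const t (x ^ 2)).div ((hasDerivAt_id t).const_mul 4) (by simpa)
  have hlogt := (Real.hasDerivAt_log ht).const_mul (5 / 2)
  refine ((hlog.add hquad).sub hlogt).congr_deriv ?_
  simp only [solT, id]
  field_simp
  ring

theorem hasDerivAt_solX_x (h : (x, t) ∈ domain) :
    HasDerivAt (fun y => solX y t) (solXX x t) x := by
  obtain ⟨hx, ht, hq⟩ := mem_domain.1 h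
  have h1 := ((hasDerivAt_id x).const_mul 2).div hasDerivAt_sq_sub_x hq
  have h2 := (hasDerivAt_const x 1).div (hasDerivAt_id x) hx
  have h3 := (hasDerivAt_id x).div_const (2 * t)
  refine ((h1.sub h2).add h3).congr_deriv ?_
  simp only [solXX, id]
  field_simp
  ring

theorem hasDerivAt_solXX_x (h : (x, t) ∈ domain) :
    HasDerivAt (fun y => solXX y t) (solXXX x t) x := by
  obtain ⟨hx, -, hq⟩ := mem_domain.1 h
  have h1 := (hasDerivAt_const x 2).div hasDerivAt_sq_sub_x hq
  have h2 := ((hasDerivAt_pow 2 x).const_mul 4).div (hasDerivAt_sq_sub_x.pow 2) (pow_ne_zero 2 hq)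
  have h3 := (hasDerivAt_const x 1).div (hasDerivAt_pow 2 x) (pow_ne_zero 2 hx)
  refine (((h1.sub h2).add h3).add_const _).congr_deriv ?_
  simp only [solXXX, Pi.pow_apply]
  field_simp
  ring

theorem hasDerivAt_solXXX_x (h : (x, t) ∈ domain) :
    HasDerivAt (fun y => solXXX y t) (solXXXX x t) x := by
  obtain ⟨hx, -, hq⟩ := mem_domain.1 h
  have h1 := ((hasDerivAt_id x).const_mul 12).neg.div (hasDerivAt_sq_sub_x.pow 2) (pow_ne_zero 2 hq)
  have h2 := ((hasDerivAt_pow 3 x).const_mul 16).div (hasDerivAt_sq_sub_x.pow 3) (pow_ne_zero 3 hq)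
  have h3 := (hasDerivAt_const x 2).div (hasDerivAt_pow 3 x) (pow_ne_zero 3 hx)
  refine ((h1.add h2).sub h3).congr_deriv ?_
  simp only [solXXXX, id, Pi.pow_apply, Pi.neg_apply]
  field_simp
  ring

theorem hasDerivAt_solX_t (h : (x, t) ∈ domain) :
    HasDerivAt (fun s => solX x s) (solXT x t) t := by
  obtain ⟨-, ht, hq⟩ := mem_domain.1 h
  have h1 := (hasDerivAt_const t (2 * x)).div hasDerivAt_sq_sub_t hq
  have h2 := (hasDerivAt_const t x).div ((hasDerivAt_id t).const_mul 2) (by simpa)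
  refine ((h1.sub_const _).add h2).congr_deriv ?_
  simp only [solXT, id]
  field_simp
  ring

theorem hasDerivAt_solT_t (h : (x, t) ∈ domain) :
    HasDerivAt (fun s => solT x s) (solTT x t) t := by
  obtain ⟨-, ht, hq⟩ := mem_domain.1 h
  have h1 := (hasDerivAt_const t (-2)).div hasDerivAt_sq_sub_t hq
  have h2 := (hasDerivAt_const t (x ^ 2)).div ((hasDerivAt_pow 2 t).const_mul 4) (by positivity)
  have h3 := (hasDerivAt_const t (5 / 2)).div (hasDerivAt_id t) ht
  refine ((h1.sub h2).sub h3).congr_deriv ?_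
  simp only [solTT, id]
  field_simp
  ring

end Derivatives

theorem dww_closedForm_eq_zero (h : (x, t) ∈ domain) :
    solTT x t + 2 * solT x t * solXX x t + 4 * solX x t * solXT x t
      + 6 * solX x t ^ 2 * solXX x t - solXXXX x t = 0 := by
  obtain ⟨hx, ht, hq⟩ := mem_domain.1 h
  simp only [solTT, solT, solXX, solX, solXT, solXXXX]
  field_simp
  ring

end DWWRational

open DWWRational

/-- The rational solution `U = ln(Φ_{2,1}/Φ_{1,1}) + x²/(4t) - (5/2) ln t` of the DWW
equation, with `Φ_{1,1} = x`, `Φ_{2,1} = x² - 2t`. -/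
theorem dww_wronskian_sol_11 :
    ∀ x t : ℝ, 0 < t → x ≠ 0 → x ^ 2 ≠ 2 * t →
      DWWEq (fun x t =>
        Real.log ((x ^ 2 - 2 * t) / x) + x ^ 2 / (4 * t) - (5 / 2) * Real.log t) x t := by
  intro x t ht hx hq
  have h : (x, t) ∈ domain := mem_domain.2 ⟨hx, ht.ne', sub_ne_zero.2 hq⟩
  have hX := pdx_eqOn_of_hasDerivAt isOpen_domain (fun _ _ _ => rfl) fun _ _ => hasDerivAt_sol_x
  have hXX := pdx_eqOn_of_hasDerivAt isOpen_domain hX fun _ _ => hasDerivAt_solX_x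
  have hXXX := pdx_eqOn_of_hasDerivAt isOpen_domain hXX fun _ _ => hasDerivAt_solXX_x
  have hXXXX := pdx_eqOn_of_hasDerivAt isOpen_domain hXXX fun _ _ => hasDerivAt_solXXX_x
  have hT := pdt_eqOn_of_hasDerivAt isOpen_domain (fun _ _ _ => rfl) fun _ _ => hasDerivAt_sol_t
  have hTT := pdt_eqOn_of_hasDerivAt isOpen_domain hT fun _ _ => hasDerivAt_solT_t
  have hXT := pdt_eqOn_of_hasDerivAt isOpen_domain hX fun _ _ => hasDerivAt_solX_t
  change DWWEq sol x t
  rw [DWWEq, hTT x t h, hT x t h, hXX x t h, hX x t h, hXT x t h, hXXXX x t h]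
  exact dww_closedForm_eq_zero h
end
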